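/- Let d be an even positive integer, let δ ≤ d/4 be a positive integer, and let 0 < p ≤ q. Then D₂(x⁺, x⁻) ≥ q√d; that is, for every θ ∈ ℝ, ‖x⁺ − e^{iθ}x⁻‖₂² ≥ d·q². -/

import Mathlib

open scoped BigOperators

noncomputable section

/-- Map an integer to `Fin d` by reduction mod `d` (requires `0 < d`). -/
def intToFin (d : ℕ) (hd : 0 < d) (z : ℤ) : Fin d :=
  ⟨(z % (d : ℤ)).toNat, by
    have h1 : 0 ≤ z % (d : ℤ) := Int.emod_nonneg z (by exact_mod_cast hd.ne')
    have h2 : z % (d : ℤ) < (d : ℤ) := Int.emod_lt_of_pos z (by exact_mod_cast hd)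
    omega⟩

/-- Circular shift: `(S_ℓ x)(n) = x(((n + ℓ - 1) mod d) + 1)` in 1-based indexing. -/
def shift {d : ℕ} (ℓ : ℤ) (x : Fin d → ℂ) : Fin d → ℂ :=
  fun i => x (intToFin d i.pos ((i : ℤ) + ℓ))

/-- `⟨u,v⟩ = ∑ u(n) conj(v(n))`. -/
def innerC {d : ℕ} (u v : Fin d → ℂ) : ℂ := ∑ n, u n * (starRingEnd ℂ) (v n)

/-- `x ∼ x'` iff `x = e^{iθ} x'` for some real `θ`. -/
def phaseEquiv {d : ℕ} (x x' : Fin d → ℂ) : Prop :=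
  ∃ θ : ℝ, x = fun n => Complex.exp (θ * Complex.I) * x' n

/-- Euclidean norm on `ℂ^d`. -/
def norm2 {d : ℕ} (x : Fin d → ℂ) : ℝ := Real.sqrt (∑ n, ‖x n‖ ^ 2)

/-- `D₂(x,x') = min_θ ‖x - e^{iθ} x'‖₂`. -/
def D2 {d : ℕ} (x x' : Fin d → ℂ) : ℝ :=
  ⨅ θ : ℝ, norm2 (fun n => x n - Complex.exp (θ * Complex.I) * x' n)

/-- `C_{p,q} = {x : p ≤ |x(n)| ≤ q for all n}`. -/
def Cpq (d : ℕ) (p q : ℝ) : Set (Fin d → ℂ) :=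
  {x | ∀ n, p ≤ ‖x n‖ ∧ ‖x n‖ ≤ q}

/-- `‖m‖_∞ = max_k ‖m_k‖_∞`. -/
def maskSup {d K : ℕ} (m : Fin K → Fin d → ℂ) : ℝ :=
  ⨆ k, ⨆ n, ‖m k n‖

/-- The measurement map `Z(x)_{k,ℓ} = |⟨S_{ℓa} m_k, x⟩|`, `1 ≤ k ≤ K`, `1 ≤ ℓ ≤ L`. -/
def Zmap {d K : ℕ} (L : ℕ) (m : Fin K → Fin d → ℂ) (a : ℕ) (x : Fin d → ℂ) :
    EuclideanSpace ℝ (Fin K × Fin L) :=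
  WithLp.toLp 2 (fun kl : Fin K × Fin L => ‖innerC (shift ((((kl.2 : ℕ) + 1) * a : ℕ) : ℤ) (m kl.1)) x‖)

/-- The measurement map `Y(x)_{k,ℓ} = |⟨S_{ℓa} m_k, x⟩|²`. -/
def Ymap {d K : ℕ} (L : ℕ) (m : Fin K → Fin d → ℂ) (a : ℕ) (x : Fin d → ℂ) :
    EuclideanSpace ℝ (Fin K × Fin L) :=
  WithLp.toLp 2 (fun kl : Fin K × Fin L => ‖innerC (shift ((((kl.2 : ℕ) + 1) * a : ℕ) : ℤ) (m kl.1)) x‖ ^ 2)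

/-- The vectors `x^{±}` (sign `ε = ±1`): `q` on positions `1,…,d/2-δ`, `p` on
`d/2-δ+1,…,d/2`, `±q` on `d/2+1,…,d-δ`, and `p` on `d-δ+1,…,d`. -/
def xpm (d δ : ℕ) (p q ε : ℝ) : Fin d → ℂ :=
  fun i => if (i : ℕ) < d / 2 - δ then (q : ℂ)
    else if (i : ℕ) < d / 2 then (p : ℂ)
    else if (i : ℕ) < d - δ then ((ε * q : ℝ) : ℂ)
    else (p : ℂ)

/-- The difference of outer products `x x^* - x' x'^*`. -/
def outerDiff {d : ℕ} (x x' : Fin d → ℂ) : Matrix (Fin d) (Fin d) ℂ :=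
  Matrix.of fun i j => x i * star (x j) - x' i * star (x' j)

lemma outerDiff_isHermitian {d : ℕ} (x x' : Fin d → ℂ) :
    (outerDiff x x').IsHermitian := by
  unfold Matrix.IsHermitian
  ext i j
  simp [outerDiff, Matrix.conjTranspose_apply, star_sub, star_mul, star_star, mul_comm]

/-- `d₁(x,x') = ‖x x^* - x' x'^*‖₁`, the sum of the singular values (for a Hermitian
matrix, the sum of the absolute values of its eigenvalues). -/
def d1 {d : ℕ} (x x' : Fin d → ℂ) : ℝ :=
  ∑ i, |(outerDiff_isHermitian x x').eigenvalues i|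

/-! The coordinates of `x⁺` and `x⁻` agree (value `q`) on the first block and are opposite
(`±q`) on the third, which has the same length `d/2 - δ`. Pairing the `i`-th coordinate of the
first block with the `i`-th of the third, the parallelogram law gives
`‖q - e^{iθ}q‖² + ‖q + e^{iθ}q‖² = 4q²` whatever `θ` is, so the squared distance is at least
`4q²(d/2 - δ) ≥ dq²`. -/

theorem le_D2_of_forall_sq_le_sum {d : ℕ} {x x' : Fin d → ℂ} {r : ℝ}
    (h : ∀ θ : ℝ, r ^ 2 ≤ ∑ n, ‖x n - Complex.exp (θ * Complex.I) * x' n‖ ^ 2) :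
    r ≤ D2 x x' :=
  le_ciInf fun θ => (le_abs_self r).trans (Real.abs_le_sqrt (h θ))

theorem mul_le_sum_of_add_eq {k j : ℕ} {f : Fin ((k + j) + (k + j)) → ℝ} (hf : ∀ i, 0 ≤ f i)
    {c : ℝ} (hc : ∀ i : Fin k,
      f (Fin.castAdd _ (Fin.castAdd j i)) + f (Fin.natAdd _ (Fin.castAdd j i)) = c) :
    k * c ≤ ∑ i, f i := by
  rw [Fin.sum_univ_add, ← Finset.sum_add_distrib, Fin.sum_univ_add]
  simp only [hc, Finset.sum_const, Finset.card_univ, Fintype.card_fin, nsmul_eq_mul]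
  exact le_add_of_nonneg_right (Finset.sum_nonneg fun i _ => add_nonneg (hf _) (hf _))

section xpm

variable {d δ : ℕ} {p q ε : ℝ} {i : Fin d}

theorem xpm_apply_of_lt (hi : (i : ℕ) < d / 2 - δ) : xpm d δ p q ε i = q := by
  simp only [xpm, if_pos hi]

theorem xpm_apply_of_le_of_lt (hi : d / 2 ≤ (i : ℕ)) (hi' : (i : ℕ) < d - δ) :
    xpm d δ p q ε i = ((ε * q : ℝ) : ℂ) := by
  simp only [xpm, if_neg (show ¬(i : ℕ) < d / 2 - δ by omega), if_neg (not_lt.2 hi), if_pos hi']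

end xpm

theorem norm_sub_sq_add_norm_add_sq_exp_mul (q θ : ℝ) :
    ‖(q : ℂ) - Complex.exp (θ * Complex.I) * q‖ ^ 2 +
      ‖(q : ℂ) + Complex.exp (θ * Complex.I) * q‖ ^ 2 = 4 * q ^ 2 := by
  rw [add_comm, parallelogram_law_with_norm ℝ, norm_mul, Complex.norm_exp_ofReal_mul_I, one_mul,
    Complex.norm_real, Real.norm_eq_abs, sq_abs]
  ring

theorem mul_sq_le_sum_norm_xpm_sub_exp_mul_sq {d δ : ℕ} (p q : ℝ) (hd : Even d)
    (hδd : 4 * δ ≤ d) (θ : ℝ) :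
    (d : ℝ) * q ^ 2 ≤
      ∑ n, ‖xpm d δ p q 1 n - Complex.exp (θ * Complex.I) * xpm d δ p q (-1) n‖ ^ 2 := by
  obtain ⟨k, rfl⟩ : ∃ k, d = (k + δ) + (k + δ) := ⟨d / 2 - δ, by obtain ⟨m, rfl⟩ := hd; omega⟩
  set f : Fin ((k + δ) + (k + δ)) → ℝ := fun n =>
    ‖xpm _ δ p q 1 n - Complex.exp (θ * Complex.I) * xpm _ δ p q (-1) n‖ ^ 2
  have hpair : ∀ i : Fin k,
      f (Fin.castAdd (k + δ) (Fin.castAdd δ i)) + f (Fin.natAdd (k + δ) (Fin.castAdd δ i)) =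
        4 * q ^ 2 := by
    intro i
    have hi := i.isLt
    simp only [f]
    rw [xpm_apply_of_lt, xpm_apply_of_lt, xpm_apply_of_le_of_lt, xpm_apply_of_le_of_lt,
      ← norm_sub_sq_add_norm_add_sq_exp_mul q θ]
    · congr 3
      push_cast
      ring
    all_goals simp only [Fin.val_castAdd, Fin.val_natAdd]; omega
  calc (((k + δ) + (k + δ) : ℕ) : ℝ) * q ^ 2 ≤ k * (4 * q ^ 2) := by
        have hδk : (δ : ℝ) ≤ k := by exact_mod_cast (show δ ≤ k by omega)
        push_cast
        nlinarith [sq_nonneg q]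
    _ ≤ _ := mul_le_sum_of_add_eq (fun _ => by positivity) hpair

theorem D2_lower_bound_general (d δ : ℕ) (p q : ℝ) (hd : Even d)
    (hδd : 4 * δ ≤ d) :
    q * Real.sqrt d ≤ D2 (xpm d δ p q 1) (xpm d δ p q (-1)) ∧
    ∀ θ : ℝ, (d : ℝ) * q ^ 2 ≤
      ∑ n, ‖xpm d δ p q 1 n
        - Complex.exp (θ * Complex.I) * xpm d δ p q (-1) n‖ ^ 2 := by
  have hbound := mul_sq_le_sum_norm_xpm_sub_exp_mul_sq p q hd hδd
  refine ⟨le_D2_of_forall_sq_le_sum fun θ => ?_, hbound⟩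
  rw [mul_pow, Real.sq_sqrt (Nat.cast_nonneg d), mul_comm]
  exact hbound θ

/-- `D₂(x⁺, x⁻) ≥ q√d`: for every `θ`, `‖x⁺ - e^{iθ}x⁻‖₂² ≥ dq²`. -/
theorem D2_lower_bound (d δ : ℕ) (p q : ℝ) (hd0 : 0 < d) (hd : Even d) (hδ : 0 < δ)
    (hδd : 4 * δ ≤ d) (hp : 0 < p) (hpq : p ≤ q) :
    q * Real.sqrt d ≤ D2 (xpm d δ p q 1) (xpm d δ p q (-1)) ∧
    ∀ θ : ℝ, (d : ℝ) * q ^ 2 ≤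
      ∑ n, ‖xpm d δ p q 1 n
        - Complex.exp (θ * Complex.I) * xpm d δ p q (-1) n‖ ^ 2 :=
  D2_lower_bound_general d δ p q hd hδd
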